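/- arXiv:1811.09116 — 4 statements merged into one kernel-verified Lean document; each statement's English description precedes it below -/
import Mathlib

section
/- Let k be an arbitrary field, n ≥ 1, and u ∈ GL_n(k) an invertible upper triangular matrix, and for g ∈ GL_n(k) let 𝔟_g := g⁻¹ 𝔟₀ g, where 𝔟₀ is the upper triangular Borel subalgebra. Then for every pair (i,j) with 1 ≤ j ≤ i ≤ n there exist scalars x_{i,j+1}, …, x_{i,i} ∈ k such that the matrix a^{i,j} := e^{i,j} + ∑_{l=j+1}^{i} x_{i,l} e^{i,l} (where e^{p,q} denotes the elementary matrix) satisfies a^{i,j} ∈ 𝔟_{s_{(i,j)} u⁻¹}, where s_{(i,j)} is the permutation matrix of the transposition (i,j); that is, s_{(i,j)} (u⁻¹ a^{i,j} u) s_{(i,j)}⁻¹ ∈ 𝔟₀. -/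
open Matrix

/-- The Borel subalgebra of upper triangular matrices, as a `k`-submodule of `gl_n(k)`. -/
def borel0 (k : Type*) [Field k] (n : ℕ) : Submodule k (Matrix (Fin n) (Fin n) k) where
  carrier := {M | ∀ i j : Fin n, j < i → M i j = 0}
  add_mem' := by intro a b ha hb i j hij; simp [Matrix.add_apply, ha i j hij, hb i j hij]
  zero_mem' := by intro i j hij; simp
  smul_mem' := by intro c a ha i j hij; simp [Matrix.smul_apply, ha i j hij]

/-- Conjugation `A ↦ g⁻¹ A g` as a `k`-linear endomorphism of `gl_n(k)`. -/
noncomputable def conjMap (k : Type*) [Field k] (n : ℕ) (g : Matrix (Fin n) (Fin n) k) :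
    Matrix (Fin n) (Fin n) k →ₗ[k] Matrix (Fin n) (Fin n) k :=
  (LinearMap.mulLeft k g⁻¹).comp (LinearMap.mulRight k g)

/-- `𝔟_g = g⁻¹ 𝔟₀ g`, the conjugate Borel subalgebra. -/
noncomputable def borelConj (k : Type*) [Field k] (n : ℕ) (g : Matrix (Fin n) (Fin n) k) :
    Submodule k (Matrix (Fin n) (Fin n) k) :=
  (borel0 k n).map (conjMap k n g)


noncomputable def Xrec {k : Type*} [Field k] {n : ℕ} (u : Matrix (Fin n) (Fin n) k)
    (j : Fin n) : Fin n → k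
  | q => (- u j q - ∑ l ∈ (Finset.Ioo j q).attach, Xrec u j l * u l q) / u q q
  termination_by q => q.val
  decreasing_by exact (Finset.mem_Ioo.mp l.2).2

section Aux
variable {k : Type*} [Field k] {n : ℕ} (u : Matrix (Fin n) (Fin n) k) (i j : Fin n)

/-- the row vector `w = vᵀ u`. -/
noncomputable def wvec (q : Fin n) : k :=
  u j q + ∑ l ∈ Finset.Ioc j i, Xrec u j l * u l q

lemma wvec_eq_zero_of_lt (hu : ∀ i j : Fin n, j < i → u i j = 0) {q : Fin n} (hq : q < j) :
    wvec u i j q = 0 := by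
  unfold wvec
  rw [hu j q hq, Finset.sum_eq_zero, zero_add]
  intro l hl
  rw [hu l q (hq.trans (Finset.mem_Ioc.mp hl).1), mul_zero]

lemma wvec_eq_zero_of_mem (hu : ∀ i j : Fin n, j < i → u i j = 0)
    (hdiag : ∀ q : Fin n, u q q ≠ 0) {q : Fin n}
    (hq : q ∈ Finset.Ioc j i) : wvec u i j q = 0 := by
  obtain ⟨h1, h2⟩ := Finset.mem_Ioc.mp hq
  unfold wvec
  have hsub : Finset.Ioc j q ⊆ Finset.Ioc j i := Finset.Ioc_subset_Ioc_right h2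
  have hrestr : ∑ l ∈ Finset.Ioc j i, Xrec u j l * u l q
      = ∑ l ∈ Finset.Ioc j q, Xrec u j l * u l q := by
    refine (Finset.sum_subset hsub fun l hl hl' => ?_).symm
    have hql : q < l := by
      rcases lt_or_ge q l with h | h
      · exact h
      · exact absurd (Finset.mem_Ioc.mpr ⟨(Finset.mem_Ioc.mp hl).1, h⟩) hl'
    rw [hu l q hql, mul_zero]
  rw [hrestr, ← Finset.Ioo_insert_right h1, Finset.sum_insert Finset.right_notMem_Ioo]
  have hx : Xrec u j q * u q q
      = - u j q - ∑ l ∈ (Finset.Ioo j q).attach, Xrec u j l * u l q := by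
    rw [Xrec]; exact div_mul_cancel₀ _ (hdiag q)
  rw [← Finset.sum_attach (Finset.Ioo j q) (fun l => Xrec u j l * u l q), hx]
  ring

lemma wvec_eq_zero (hu : ∀ i j : Fin n, j < i → u i j = 0)
    (hdiag : ∀ q : Fin n, u q q ≠ 0) {q : Fin n}
    (hq : q ≠ j) (hq2 : q ≤ i) : wvec u i j q = 0 := by
  rcases lt_or_gt_of_ne hq with h | h
  · exact wvec_eq_zero_of_lt u i j hu h
  · exact wvec_eq_zero_of_mem u i j hu hdiag (Finset.mem_Ioc.mpr ⟨h, hq2⟩)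

end Aux

/-- key combinatorial case analysis -/
lemma swap_cases {n : ℕ} (i j p q : Fin n) (hij : j ≤ i) (hpq : q < p)
    (h : ¬ i < Equiv.swap i j p) :
    Equiv.swap i j q ≠ j ∧ Equiv.swap i j q ≤ i := by
  by_cases hpi : p = i
  · have hqi : q < i := hpq.trans_le (le_of_eq hpi)
    by_cases hqj : q = j
    · have hji : j < i := by rw [← hqj]; exact hqi
      rw [hqj, Equiv.swap_apply_right]
      exact ⟨hji.ne', le_refl i⟩
    · rw [Equiv.swap_apply_of_ne_of_ne hqi.ne hqj]
      exact ⟨hqj, hqi.le⟩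
  · by_cases hpj : p = j
    · have hqj : q < j := hpq.trans_le (le_of_eq hpj)
      rw [Equiv.swap_apply_of_ne_of_ne (hqj.trans_le hij).ne hqj.ne]
      exact ⟨hqj.ne, (hqj.trans_le hij).le⟩
    · rw [Equiv.swap_apply_of_ne_of_ne hpi hpj] at h
      have hqi : q < i := hpq.trans (lt_of_le_of_ne (not_lt.mp h) hpi)
      by_cases hqj : q = j
      · have hji : j < i := by rw [← hqj]; exact hqi
        rw [hqj, Equiv.swap_apply_right]
        exact ⟨hji.ne', le_refl i⟩
      · rw [Equiv.swap_apply_of_ne_of_ne hqi.ne hqj]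
        exact ⟨hqj, hqi.le⟩


/-- For any invertible upper triangular `u` and any pair `j ≤ i` there are scalars
`x_{i,j+1}, …, x_{i,i}` such that `a^{i,j} = e^{i,j} + ∑_{l=j+1}^{i} x_{i,l} e^{i,l}`
lies in `𝔟_{s_{(i,j)} u⁻¹}`, where `s_{(i,j)}` is the transposition matrix. -/
theorem exists_aij_in_conjugate_borel (k : Type*) [Field k] (n : ℕ) (hn : 0 < n)
    (u : Matrix (Fin n) (Fin n) k) (hu : ∀ i j : Fin n, j < i → u i j = 0) (huu : IsUnit u)
    (i j : Fin n) (hij : j ≤ i) :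
    ∃ x : Fin n → k,
      Matrix.single i j (1 : k)
          + ∑ l ∈ Finset.Ioc j i, x l • Matrix.single i l (1 : k)
        ∈ borelConj k n (Equiv.Perm.permMatrix k (Equiv.swap i j) * u⁻¹) := by
  -- basic facts about u
  have hbt : u.BlockTriangular id := fun p q h => hu p q h
  have hdet : IsUnit u.det := (Matrix.isUnit_iff_isUnit_det u).mp huu
  have hdiag : ∀ q : Fin n, u q q ≠ 0 := by
    intro q
    have h0 : u.det ≠ 0 := hdet.ne_zero
    rw [Matrix.det_of_upperTriangular hbt] at h0
    exact Finset.prod_ne_zero_iff.mp h0 q (Finset.mem_univ q)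
  haveI : Invertible u := u.invertibleOfIsUnitDet hdet
  have hbtInv : u⁻¹.BlockTriangular id := Matrix.blockTriangular_inv_of_blockTriangular hbt
  set s : Matrix (Fin n) (Fin n) k := Equiv.Perm.permMatrix k (Equiv.swap i j) with hs
  have hss : s * s = 1 := by
    rw [hs]
    show (Equiv.swap i j).toPEquiv.toMatrix * (Equiv.swap i j).toPEquiv.toMatrix = 1
    rw [← PEquiv.toMatrix_trans, ← Equiv.toPEquiv_trans, Equiv.swap_swap,
      Equiv.toPEquiv_refl, PEquiv.toMatrix_refl]
  set g : Matrix (Fin n) (Fin n) k := s * u⁻¹ with hg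
  have hgdet : IsUnit g.det := by
    rw [hg, Matrix.det_mul]
    exact (Matrix.isUnit_det_of_right_inverse hss).mul (Matrix.isUnit_nonsing_inv_det u hdet)
  have hginv : g⁻¹ = u * s := by
    rw [hg, Matrix.mul_inv_rev, Matrix.nonsing_inv_nonsing_inv u hdet,
      Matrix.inv_eq_right_inv hss]
  refine ⟨Xrec u j, ?_⟩
  set a : Matrix (Fin n) (Fin n) k :=
    Matrix.single i j (1 : k)
      + ∑ l ∈ Finset.Ioc j i, Xrec u j l • Matrix.single i l (1 : k) with ha
  -- entries of a
  have haentry : ∀ p q : Fin n, a p q =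
      if p = i then ((if q = j then 1 else 0)
        + if q ∈ Finset.Ioc j i then Xrec u j q else 0)
      else 0 := by
    intro p q
    rw [ha, Matrix.add_apply, Matrix.sum_apply]
    by_cases hp : p = i
    · rw [if_pos hp, hp]
      congr 1
      · simp [Matrix.single, eq_comm]
      · simp only [Matrix.smul_apply, Matrix.single, Matrix.of_apply, smul_eq_mul,
          eq_self_iff_true, true_and, mul_ite, mul_one, mul_zero]
        rw [Finset.sum_ite_eq' (Finset.Ioc j i) q (Xrec u j)]
    · have hp' : ¬ i = p := fun h => hp h.symm
      rw [if_neg hp]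
      simp [Matrix.single, hp']
  -- entries of a * u
  have hAU : ∀ p q : Fin n, (a * u) p q = if p = i then wvec u i j q else 0 := by
    intro p q
    rw [Matrix.mul_apply]
    by_cases hp : p = i
    · rw [if_pos hp]
      have hterm : ∀ l : Fin n, a p l * u l q =
          (if l = j then u l q else 0)
            + (if l ∈ Finset.Ioc j i then Xrec u j l * u l q else 0) := by
        intro l
        rw [haentry p l, if_pos hp, add_mul]
        congr 1
        · by_cases h : l = j <;> simp [h]
        · by_cases h : l ∈ Finset.Ioc j i <;> simp [h]
      rw [Finset.sum_congr rfl fun l _ => hterm l, Finset.sum_add_distrib]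
      unfold wvec
      congr 1
      · rw [Finset.sum_ite_eq' Finset.univ j (fun l => u l q), if_pos (Finset.mem_univ j)]
      · rw [Finset.sum_ite_mem, Finset.univ_inter]
    · rw [if_neg hp]
      refine Finset.sum_eq_zero fun l _ => ?_
      rw [haentry p l, if_neg hp, zero_mul]
  refine ⟨g * a * g⁻¹, ?_, ?_⟩
  · -- membership in borel0
    intro p q hpq
    have hform : g * a * g⁻¹ = s * (u⁻¹ * (a * u)) * s := by
      rw [hg, hginv]
      simp only [Matrix.mul_assoc]
    rw [hform]
    have hmul : s * (u⁻¹ * (a * u)) * s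
        = ((u⁻¹ * (a * u)).submatrix (Equiv.swap i j) id).submatrix id (Equiv.swap i j) := by
      rw [hs]
      show (Equiv.swap i j).toPEquiv.toMatrix * (u⁻¹ * (a * u))
          * (Equiv.swap i j).toPEquiv.toMatrix = _
      rw [PEquiv.toMatrix_toPEquiv_mul, PEquiv.mul_toMatrix_toPEquiv, Equiv.symm_swap]
    rw [hmul]
    simp only [Matrix.submatrix_apply, id_eq]
    rw [Matrix.mul_apply]
    refine Finset.sum_eq_zero fun l _ => ?_
    rw [hAU]
    by_cases hl : l = i
    · rw [if_pos hl, hl]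
      by_cases hcase : i < Equiv.swap i j p
      · rw [hbtInv hcase, zero_mul]
      · obtain ⟨h1, h2⟩ := swap_cases i j p q hij hpq hcase
        rw [wvec_eq_zero u i j hu hdiag h1 h2, mul_zero]
    · rw [if_neg hl, mul_zero]
  · -- conjMap g sends it back to a
    show conjMap k n g (g * a * g⁻¹) = _
    simp only [conjMap, LinearMap.coe_comp, Function.comp_apply, LinearMap.mulLeft_apply,
      LinearMap.mulRight_apply]
    rw [Matrix.mul_assoc (g * a), Matrix.nonsing_inv_mul g hgdet, Matrix.mul_one,
      ← Matrix.mul_assoc, Matrix.nonsing_inv_mul g hgdet, Matrix.one_mul]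
end

section
/- Let k be a field and n ≥ 1. For every upper triangular u ∈ GL_n(k), the lower triangular Borel subalgebra satisfies 𝔟_{w₀ u} = ∑_{t ∈ T_n} 𝔟_{w₀ u} ∩ 𝔟_t, where T_n ⊂ S_n is the set consisting of the identity together with all transpositions (i,j), 1 ≤ j < i ≤ n — a set of cardinality (n² − n + 2)/2. -/
open Matrix

/-!
Conjugating by `w₀`, the Borel `𝔟_{w₀u}` is `u⁻¹ 𝔩 u` with `𝔩` the lower triangular matrices,
so it is spanned by the `u⁻¹ E_{ij} u` with `j ≤ i`. For `j ≤ i` let `N_{ij} = columnSegment u i j`,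
the matrix whose column `j` is column `i` of `u` cut down to the rows `j, …, i`. As `u` and `u⁻¹`
are upper triangular, `u⁻¹ N_{ij} u = (e_i + v) ⊗ (row j of u)` with `v` supported in the rows
`< j`; the transposition `(i j)` (the identity if `i = j`) moves this into the rows `≤ j` and keeps
it in the columns `≥ j`, so `u⁻¹ N_{ij} u ∈ 𝔟_{w₀u} ∩ 𝔟_{(i j)}`. Finally
`N_{ij} = u_{ii} E_{ij} + ∑_{j ≤ a < i} u_{ai} E_{aj}` with `u_{ii} ≠ 0`, so induction on `i`
recovers every `u⁻¹ E_{ij} u` from the `u⁻¹ N_{ij} u`.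
-/

theorem Matrix.IsUpperTriangular.isUnit_apply_self {m R : Type*} [Fintype m] [LinearOrder m]
    [CommRing R] {u : Matrix m m R} (hu : u.IsUpperTriangular) (hdet : IsUnit u.det) (i : m) :
    IsUnit (u i i) := by
  rw [Matrix.det_of_isUpperTriangular hu, IsUnit.prod_univ_iff] at hdet
  exact hdet i

theorem Matrix.IsUpperTriangular.inv {m R : Type*} [Fintype m] [LinearOrder m] [CommRing R]
    {u : Matrix m m R} (hu : u.IsUpperTriangular) (hdet : IsUnit u.det) :
    u⁻¹.IsUpperTriangular :=
  letI := u.invertibleOfIsUnitDet hdet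
  Matrix.blockTriangular_inv_of_blockTriangular hu

theorem Matrix.mul_single_one_mul_apply {m R : Type*} [Fintype m] [DecidableEq m] [Semiring R]
    (X Z : Matrix m m R) (a b p q : m) :
    (X * Matrix.single a b (1 : R) * Z) p q = X p a * Z b q := by
  rw [Matrix.mul_assoc, Matrix.mul_apply, Finset.sum_eq_single a]
  · rw [Matrix.single_mul_apply_same, one_mul]
  · intro c _ hc
    simp [hc]
  · simp

theorem Equiv.le_swap_apply_iff {α : Type*} [LinearOrder α] {i j : α} (hji : j ≤ i) (x : α) :
    j ≤ Equiv.swap i j x ↔ j ≤ x := by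
  rw [Equiv.swap_apply_def]
  split_ifs with hi hj <;> subst_vars <;> simp [hji]

section

variable {k : Type*} [Field k] {n : ℕ}

theorem conjMap_apply (g A : Matrix (Fin n) (Fin n) k) : conjMap k n g A = g⁻¹ * (A * g) := rfl

theorem borelConj_mul (g h : Matrix (Fin n) (Fin n) k) :
    borelConj k n (g * h) = (borelConj k n g).map (conjMap k n h) := by
  rw [borelConj, borelConj, ← Submodule.map_comp]
  congr 1
  ext A : 1
  simp only [LinearMap.comp_apply, conjMap_apply, Matrix.mul_inv_rev, Matrix.mul_assoc]

theorem conjMap_permMatrix (σ : Equiv.Perm (Fin n)) (A : Matrix (Fin n) (Fin n) k) :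
    conjMap k n (σ.permMatrix k) A = A.submatrix ⇑σ⁻¹ ⇑σ⁻¹ := by
  have hinv : (σ.permMatrix k)⁻¹ = σ⁻¹.permMatrix k :=
    Matrix.inv_eq_right_inv (by rw [← Matrix.permMatrix_mul, inv_mul_cancel, Matrix.permMatrix_one])
  rw [conjMap_apply, hinv, PEquiv.mul_toMatrix_toPEquiv, PEquiv.toMatrix_toPEquiv_mul]
  rfl

theorem mem_borelConj_permMatrix_iff (σ : Equiv.Perm (Fin n)) (M : Matrix (Fin n) (Fin n) k) :
    M ∈ borelConj k n (σ.permMatrix k) ↔ ∀ a b, b < a → M (σ a) (σ b) = 0 := by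
  constructor
  · rintro ⟨A, hA, rfl⟩ a b hab
    simpa [conjMap_permMatrix] using hA a b hab
  · intro hM
    refine ⟨M.submatrix σ σ, hM, ?_⟩
    ext a b
    simp [conjMap_permMatrix]

theorem mem_borelConj_revPerm_iff (M : Matrix (Fin n) (Fin n) k) :
    M ∈ borelConj k n (Fin.revPerm.permMatrix k) ↔ ∀ p q, p < q → M p q = 0 := by
  rw [mem_borelConj_permMatrix_iff]
  refine ⟨fun h p q hpq => ?_, fun h a b hab => h _ _ (Fin.rev_lt_rev.mpr hab)⟩
  simpa using h p.rev q.rev (Fin.rev_lt_rev.mpr hpq)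

theorem single_mem_borelConj_revPerm {i j : Fin n} (hji : j ≤ i) (c : k) :
    Matrix.single i j c ∈ borelConj k n (Fin.revPerm.permMatrix k) := by
  rw [mem_borelConj_revPerm_iff]
  intro p q hpq
  exact Matrix.single_apply_of_ne _ _ _ _ _ (by rintro ⟨rfl, rfl⟩; exact absurd hpq hji.not_gt)

theorem borelConj_revPerm_le_of_single_mem {S : Submodule k (Matrix (Fin n) (Fin n) k)}
    (hS : ∀ i j : Fin n, j ≤ i → Matrix.single i j 1 ∈ S) :
    borelConj k n (Fin.revPerm.permMatrix k) ≤ S := by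
  intro L hL
  rw [Matrix.matrix_eq_sum_single L]
  refine Submodule.sum_mem _ fun i _ => Submodule.sum_mem _ fun j _ => ?_
  rcases le_or_gt j i with hji | hij
  · simpa [Matrix.smul_single] using S.smul_mem (L i j) (hS i j hji)
  · rw [(mem_borelConj_revPerm_iff L).mp hL i j hij, Matrix.single_zero]
    exact S.zero_mem

def columnSegment (u : Matrix (Fin n) (Fin n) k) (i j : Fin n) : Matrix (Fin n) (Fin n) k :=
  ∑ a ∈ Finset.Icc j i, u a i • Matrix.single a j 1

theorem single_mem_of_columnSegment_mem {u : Matrix (Fin n) (Fin n) k}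
    (hu : ∀ i, u i i ≠ 0) {S : Submodule k (Matrix (Fin n) (Fin n) k)}
    (hS : ∀ i j : Fin n, j ≤ i → columnSegment u i j ∈ S) {i j : Fin n} (hji : j ≤ i) :
    Matrix.single i j 1 ∈ S := by
  induction i using WellFoundedLT.induction with
  | ind i ih =>
  have hsplit : columnSegment u i j = u i i • Matrix.single i j 1 +
      ∑ a ∈ Finset.Ico j i, u a i • Matrix.single a j 1 := by
    rw [columnSegment, ← Finset.add_sum_erase _ _ (Finset.mem_Icc.mpr ⟨hji, le_rfl⟩),
      Finset.Icc_erase_right]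
  have hlower : ∑ a ∈ Finset.Ico j i, u a i • Matrix.single a j (1 : k) ∈ S :=
    S.sum_mem fun a ha =>
      S.smul_mem _ (ih a (Finset.mem_Ico.mp ha).2 (Finset.mem_Ico.mp ha).1)
  have hdiag : u i i • Matrix.single i j (1 : k) ∈ S := by
    simpa [hsplit] using S.sub_mem (hS i j hji) hlower
  exact (S.smul_mem_iff (hu i)).mp hdiag

theorem sum_Icc_inv_mul_apply {u : Matrix (Fin n) (Fin n) k} (hu : u.IsUpperTriangular)
    (hdet : IsUnit u.det) {i j p : Fin n} (hjp : j ≤ p) :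
    ∑ a ∈ Finset.Icc j i, u⁻¹ p a * u a i = (1 : Matrix (Fin n) (Fin n) k) p i := by
  rw [← Matrix.nonsing_inv_mul u hdet, Matrix.mul_apply]
  refine Finset.sum_subset (Finset.subset_univ _) fun a _ ha => ?_
  rcases lt_or_ge a j with haj | hja
  · rw [hu.inv hdet (haj.trans_le hjp), zero_mul]
  · rw [hu (lt_of_not_ge fun hai => ha (Finset.mem_Icc.mpr ⟨hja, hai⟩)), mul_zero]

theorem conjMap_columnSegment_apply (u : Matrix (Fin n) (Fin n) k) (i j p q : Fin n) :
    conjMap k n u (columnSegment u i j) p q = (∑ a ∈ Finset.Icc j i, u⁻¹ p a * u a i) * u j q := by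
  rw [Finset.sum_mul, conjMap_apply, columnSegment, Finset.sum_mul, Matrix.mul_sum,
    Matrix.sum_apply]
  refine Finset.sum_congr rfl fun a _ => ?_
  rw [Matrix.smul_mul, Matrix.mul_smul, Matrix.smul_apply, ← Matrix.mul_assoc,
    Matrix.mul_single_one_mul_apply, smul_eq_mul]
  ring

theorem columnSegment_mem_borelConj_revPerm (u : Matrix (Fin n) (Fin n) k) {i j : Fin n} :
    columnSegment u i j ∈ borelConj k n (Fin.revPerm.permMatrix k) :=
  Submodule.sum_mem _ fun _ ha => Submodule.smul_mem _ _
    (single_mem_borelConj_revPerm (Finset.mem_Icc.mp ha).1 1)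

theorem conjMap_columnSegment_mem_borelConj_swap {u : Matrix (Fin n) (Fin n) k}
    (hu : u.IsUpperTriangular) (hdet : IsUnit u.det) {i j : Fin n} (hji : j ≤ i) :
    conjMap k n u (columnSegment u i j) ∈ borelConj k n ((Equiv.swap i j).permMatrix k) := by
  rw [mem_borelConj_permMatrix_iff]
  intro a b hba
  rcases lt_or_ge (Equiv.swap i j b) j with hb | hb
  · rw [conjMap_columnSegment_apply, hu hb, mul_zero]
  · have hjb := (Equiv.le_swap_apply_iff hji b).mp hb
    have hja : j ≤ Equiv.swap i j a := (Equiv.le_swap_apply_iff hji a).mpr (hjb.trans hba.le)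
    have hai : Equiv.swap i j a ≠ i := by
      rw [Ne, Equiv.swap_apply_eq_iff, Equiv.swap_apply_left]
      exact (hjb.trans_lt hba).ne'
    rw [conjMap_columnSegment_apply, sum_Icc_inv_mul_apply hu hdet hja, Matrix.one_apply_ne hai,
      zero_mul]

end

theorem envelope_over_transpositions_general (k : Type*) [Field k] (n : ℕ)
    (u : Matrix (Fin n) (Fin n) k) (hu : ∀ i j : Fin n, j < i → u i j = 0) (huu : IsUnit u) :
    borelConj k n (Equiv.Perm.permMatrix k (Fin.revPerm : Equiv.Perm (Fin n)) * u) =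
      ⨆ t ∈ {σ : Equiv.Perm (Fin n) |
              σ = 1 ∨ ∃ i j : Fin n, i ≠ j ∧ σ = Equiv.swap i j},
        (borelConj k n (Equiv.Perm.permMatrix k (Fin.revPerm : Equiv.Perm (Fin n)) * u) ⊓
          borelConj k n (Equiv.Perm.permMatrix k t)) := by
  have hupper : u.IsUpperTriangular := fun i j => hu i j
  have hdet := (Matrix.isUnit_iff_isUnit_det u).mp huu
  refine le_antisymm ?_ (iSup₂_le fun _ _ => inf_le_left)
  rw [borelConj_mul, Submodule.map_le_iff_le_comap]
  have hdiag i : u i i ≠ 0 := (hupper.isUnit_apply_self hdet i).ne_zero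
  refine borelConj_revPerm_le_of_single_mem fun i j hji =>
    single_mem_of_columnSegment_mem hdiag (fun i j hji => ?_) hji
  have hswap : Equiv.swap i j = 1 ∨ ∃ a b : Fin n, a ≠ b ∧ Equiv.swap i j = Equiv.swap a b := by
    rcases eq_or_ne i j with rfl | hij
    · exact Or.inl (Equiv.swap_self i)
    · exact Or.inr ⟨i, j, hij, rfl⟩
  exact Submodule.mem_iSup_of_mem _ <| Submodule.mem_iSup_of_mem hswap
    ⟨Submodule.mem_map_of_mem (columnSegment_mem_borelConj_revPerm u),
      conjMap_columnSegment_mem_borelConj_swap hupper hdet hji⟩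

/-- For an invertible upper triangular `u`, the lower triangular Borel `𝔟_{w₀u}` is already the
sum of its intersections with `𝔟_t` for `t` in the set `T_n` consisting of the identity together
with all transpositions (a set of cardinality `(n² − n + 2)/2`). -/
theorem envelope_over_transpositions (k : Type*) [Field k] (n : ℕ) (hn : 0 < n)
    (u : Matrix (Fin n) (Fin n) k) (hu : ∀ i j : Fin n, j < i → u i j = 0) (huu : IsUnit u) :
    borelConj k n (Equiv.Perm.permMatrix k (Fin.revPerm : Equiv.Perm (Fin n)) * u) =
      ⨆ t ∈ {σ : Equiv.Perm (Fin n) |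
              σ = 1 ∨ ∃ i j : Fin n, i ≠ j ∧ σ = Equiv.swap i j},
        (borelConj k n (Equiv.Perm.permMatrix k (Fin.revPerm : Equiv.Perm (Fin n)) * u) ⊓
          borelConj k n (Equiv.Perm.permMatrix k t)) :=
  envelope_over_transpositions_general k n u hu huu
end

section
/- With G = GL_n over a field k, B the upper triangular Borel, and 𝔤̃ the Grothendieck resolution, the tangent space of the fiber product 𝔤̃ ×_𝔤 𝔤̃ at a point (gB(k), 0, hB(k)) (with middle coordinate the zero matrix) is T_{gB(k)}(G/B) ⊕ (g𝔟g⁻¹ ∩ h𝔟h⁻¹) ⊕ T_{hB(k)}(G/B) inside T_{gB(k)}(G/B) ⊕ 𝔤 ⊕ T_{hB(k)}(G/B). -/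
open Matrix

/-- `M` is upper triangular. -/
def UpperTri {n : ℕ} {R : Type*} [Zero R] (M : Matrix (Fin n) (Fin n) R) : Prop :=
  ∀ i j : Fin n, j < i → M i j = 0

/-- `C` is strictly lower triangular (an element of `Lie U⁻`). -/
def StrictLower {n : ℕ} {R : Type*} [Zero R] (C : Matrix (Fin n) (Fin n) R) : Prop :=
  ∀ i j : Fin n, i ≤ j → C i j = 0

/-- Base change of a matrix to the dual numbers `k[ε]`. -/
def toDual {n : ℕ} {k : Type*} [CommRing k] (M : Matrix (Fin n) (Fin n) k) :
    Matrix (Fin n) (Fin n) (DualNumber k) :=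
  M.map (algebraMap k (DualNumber k))

namespace TangentAux

variable {n : ℕ} {k : Type*} [Field k]

lemma toDual_mul (M N : Matrix (Fin n) (Fin n) k) :
    toDual (M * N) = toDual M * toDual N := by
  simp [toDual, Matrix.map_mul]

lemma toDual_one : toDual (1 : Matrix (Fin n) (Fin n) k) = 1 := by
  simp [toDual]

lemma eps2 (X : Matrix (Fin n) (Fin n) (DualNumber k)) :
    (DualNumber.eps : DualNumber k) • ((DualNumber.eps : DualNumber k) • X) = 0 := by
  rw [smul_smul, DualNumber.eps_mul_eps, zero_smul]

lemma eps_kill (X Y : Matrix (Fin n) (Fin n) (DualNumber k)) :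
    (DualNumber.eps : DualNumber k) • (((DualNumber.eps : DualNumber k) • X) * Y) = 0 := by
  rw [smul_mul_assoc, eps2]

lemma eps_kill' (X Y : Matrix (Fin n) (Fin n) (DualNumber k)) :
    (DualNumber.eps : DualNumber k) • (Y * ((DualNumber.eps : DualNumber k) • X)) = 0 := by
  rw [mul_smul_comm, eps2]

lemma conj (g A C : Matrix (Fin n) (Fin n) k) (hg : IsUnit g) :
    (toDual g * (1 + (DualNumber.eps : DualNumber k) • toDual C))⁻¹ *
      ((DualNumber.eps : DualNumber k) • toDual A) *
      (toDual g * (1 + (DualNumber.eps : DualNumber k) • toDual C)) =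
    (DualNumber.eps : DualNumber k) • toDual (g⁻¹ * A * g) := by
  have hdet : IsUnit g.det := (Matrix.isUnit_iff_isUnit_det g).mp hg
  have h1 : g * g⁻¹ = 1 := Matrix.mul_nonsing_inv g hdet
  have h1' : toDual g * toDual g⁻¹ = 1 := by rw [← toDual_mul, h1, toDual_one]
  have hinv : (toDual g * (1 + (DualNumber.eps : DualNumber k) • toDual C))⁻¹
      = (1 - (DualNumber.eps : DualNumber k) • toDual C) * toDual g⁻¹ := by
    apply Matrix.inv_eq_right_inv
    simp only [mul_add, mul_sub, add_mul, sub_mul, one_mul, mul_one, smul_mul_assoc,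
      mul_smul_comm, smul_smul, smul_sub, smul_add, DualNumber.eps_mul_eps, zero_smul,
      sub_zero, add_zero, smul_zero, mul_assoc]
    rw [h1']
    abel
  rw [hinv, toDual_mul, toDual_mul]
  simp only [mul_add, mul_sub, add_mul, sub_mul, one_mul, mul_one, smul_mul_assoc,
    mul_smul_comm, smul_smul, smul_sub, smul_add, DualNumber.eps_mul_eps, zero_smul,
    sub_zero, add_zero, smul_zero, mul_assoc]

lemma upperTri_eps_smul (B : Matrix (Fin n) (Fin n) k) :
    UpperTri ((DualNumber.eps : DualNumber k) • toDual B) ↔ UpperTri B := by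
  unfold UpperTri
  refine forall₂_congr fun i j => imp_congr_right fun _ => ?_
  have : ((DualNumber.eps : DualNumber k) • toDual B) i j
      = (DualNumber.eps : DualNumber k) * TrivSqZeroExt.inl (B i j) := rfl
  rw [this, TrivSqZeroExt.ext_iff]
  simp

end TangentAux

/-- Tangent space of `𝔤̃ ×_𝔤 𝔤̃` at `(gB, 0, hB)`: a tangent vector given by a triple
`(C₁, A, C₂)` with `C₁, C₂ ∈ Lie U⁻` (charts `u ↦ guB` resp. `u ↦ huB` of `G/B`), i.e. by the
dual-number data `(g(1+εC₁), εA, h(1+εC₂))`, lies in the fiber product iff both defining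
conditions of `𝔤̃` hold, and this is equivalent to `g⁻¹Ag ∈ 𝔟 ∧ h⁻¹Ah ∈ 𝔟`, i.e.
`A ∈ g𝔟g⁻¹ ∩ h𝔟h⁻¹`.  Hence
`T_{(gB,0,hB)}(𝔤̃ ×_𝔤 𝔤̃) = T_{gB}(G/B) ⊕ (g𝔟g⁻¹ ∩ h𝔟h⁻¹) ⊕ T_{hB}(G/B)`. -/
theorem tangent_of_fiber_product (k : Type*) [Field k] (n : ℕ) (hn : 0 < n)
    (g h A C₁ C₂ : Matrix (Fin n) (Fin n) k) (hg : IsUnit g) (hh : IsUnit h)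
    (hC₁ : StrictLower C₁) (hC₂ : StrictLower C₂) :
    (UpperTri ((toDual g * (1 + (DualNumber.eps : DualNumber k) • toDual C₁))⁻¹ *
          ((DualNumber.eps : DualNumber k) • toDual A) *
          (toDual g * (1 + (DualNumber.eps : DualNumber k) • toDual C₁))) ∧
      UpperTri ((toDual h * (1 + (DualNumber.eps : DualNumber k) • toDual C₂))⁻¹ *
          ((DualNumber.eps : DualNumber k) • toDual A) *
          (toDual h * (1 + (DualNumber.eps : DualNumber k) • toDual C₂))))
      ↔ (UpperTri (g⁻¹ * A * g) ∧ UpperTri (h⁻¹ * A * h)) := by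
  rw [TangentAux.conj g A C₁ hg, TangentAux.conj h A C₂ hh,
    TangentAux.upperTri_eps_smul, TangentAux.upperTri_eps_smul]
end

section
/- Let R be a Bezout domain (e.g. the Robba ring), M a finite free R-module, φ : R → R an injective ring homomorphism making R flat over itself, and suppose M carries a φ-semilinear endomorphism whose linearization R ⊗_{R,φ} M → M is an isomorphism. If M' ⊆ M is a φ-stable finite free R-submodule such that M/M' is torsion-free of rank equal to rank(M) − rank(M'), then the linearized maps R ⊗_{R,φ} M' → M' and R ⊗_{R,φ} (M/M') → M/M' are both isomorphisms. -/
/-- `R` viewed as an `R`-module through the ring homomorphism `φ : R →+* R`. -/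
def Twisted (R : Type*) [CommRing R] (_φ : R →+* R) : Type _ := R

instance (R : Type*) [CommRing R] (φ : R →+* R) : AddCommGroup (Twisted R φ) :=
  inferInstanceAs (AddCommGroup R)

instance (R : Type*) [CommRing R] (φ : R →+* R) : Module R (Twisted R φ) :=
  Module.compHom R φ

/-! Over a Bezout domain a torsion-free quotient of a finite free module by a finitely generated
submodule is flat and finitely presented, hence projective; a section of the quotient map then
embeds it into the free module, and finitely generated submodules of finite free modules are free
(split off the last coordinate, whose image is a principal ideal, and induct).

Combining bases of `M'` and `M ⧸ M'` into a basis of `M`, the matrix of `ψ` becomes block upper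
triangular, with the matrices of `ψ` on `M'` and on `M ⧸ M'` as diagonal blocks. Its determinant
is a unit because `ψ` maps some basis to a basis, so both diagonal determinants are units. -/

open Module Submodule

namespace IsBezout

variable {R : Type*} [CommRing R] [IsDomain R] [IsBezout R]

theorem free_of_fg_ideal {I : Ideal R} (hI : I.FG) : Module.Free R I := by
  have := isPrincipal_of_FG I hI
  obtain rfl | hI0 := eq_or_ne I ⊥
  · infer_instance
  · exact .of_equiv (Ideal.isoBaseOfIsPrincipal hI0)

theorem free_of_injective_fin {n : ℕ} {N : Type*} [AddCommGroup N] [Module R N]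
    [Module.Finite R N] (i : N →ₗ[R] Fin n → R) (hi : Function.Injective i) :
    Module.Free R N := by
  induction n generalizing N with
  | zero =>
    have : Subsingleton N := hi.subsingleton
    infer_instance
  | succ n ih =>
    let f : N →ₗ[R] R := LinearMap.proj (Fin.last n) ∘ₗ i
    have : Module.Free R (LinearMap.range f) :=
      free_of_fg_ideal (LinearMap.range_eq_map f ▸ Module.Finite.fg_top.map f)
    obtain ⟨l, hl⟩ := Module.projective_lifting_property f.rangeRestrict LinearMap.id
      f.surjective_rangeRestrict
    let e := (f.rangeRestrict.exact_subtype_ker_map.splitSurjectiveEquiv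
      (LinearMap.ker f.rangeRestrict).injective_subtype ⟨l, hl⟩).1
    have : Module.Finite R (LinearMap.ker f.rangeRestrict) :=
      .of_surjective (LinearMap.fst _ _ _ ∘ₗ e.toLinearMap)
        (Prod.fst_surjective.comp e.surjective)
    have : Module.Free R (LinearMap.ker f.rangeRestrict) := by
      refine ih (LinearMap.funLeft R R Fin.castSucc ∘ₗ i ∘ₗ (LinearMap.ker _).subtype) ?_
      rintro ⟨x, hx⟩ ⟨y, hy⟩ hxy
      rw [LinearMap.ker_rangeRestrict, LinearMap.mem_ker] at hx hy
      refine Subtype.ext (hi (funext fun k => Fin.lastCases ?_ (fun j => congrFun hxy j) k))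
      exact hx.trans hy.symm
    exact .of_equiv e.symm

theorem free_of_injective {N F : Type*} [AddCommGroup N] [Module R N] [Module.Finite R N]
    [AddCommGroup F] [Module R F] [Module.Free R F] [Module.Finite R F]
    (i : N →ₗ[R] F) (hi : Function.Injective i) : Module.Free R N :=
  free_of_injective_fin ((finBasis R F).equivFun.toLinearMap ∘ₗ i)
    ((finBasis R F).equivFun.injective.comp hi)

theorem free_quotient_of_isTorsionFree {M : Type*} [AddCommGroup M] [Module R M]
    [Module.Free R M] [Module.Finite R M] (M' : Submodule R M) (hM' : M'.FG)
    [IsTorsionFree R (M ⧸ M')] : Module.Free R (M ⧸ M') := by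
  have : FinitePresentation R M := finitePresentation_of_projective R M
  have : FinitePresentation R (M ⧸ M') :=
    finitePresentation_of_surjective M'.mkQ M'.mkQ_surjective (by rwa [M'.ker_mkQ])
  have : Flat R (M ⧸ M') :=
    Flat.flat_iff_torsion_eq_bot_of_isBezout.2 (isTorsionFree_iff_torsion_eq_bot.1 ‹_›)
  have : Projective R (M ⧸ M') := Flat.projective_of_finitePresentation
  obtain ⟨s, hs⟩ := projective_lifting_property M'.mkQ LinearMap.id M'.mkQ_surjective
  exact free_of_injective s (Function.LeftInverse.injective (LinearMap.congr_fun hs))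

end IsBezout

namespace Module.Basis

variable {R N : Type*} [CommRing R] [AddCommGroup N] [Module R N] {φ : R →+* R}
  (ψ : N →ₛₗ[φ] N) {ι κ : Type*}

theorem toMatrix_semilinear_comp [Fintype ι] {b b' : Basis ι R N} (hb' : ∀ i, b' i = ψ (b i))
    (v : κ → N) :
    b'.toMatrix (ψ ∘ v) = (b.toMatrix v).map φ := by
  ext i j
  have hψv : ψ (v j) = ∑ k, φ (b.repr (v j) k) • b' k := by
    conv_lhs => rw [← b.sum_repr (v j)]
    simp only [map_sum, LinearMap.map_smulₛₗ, hb']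
  rw [toMatrix_apply, Function.comp_apply, hψv, b'.repr_sum_self, Matrix.map_apply,
    toMatrix_apply]

theorem isUnit_det_semilinear_comp [Nontrivial R] [Fintype κ] [DecidableEq κ]
    {b b' : Basis ι R N} (hb' : ∀ i, b' i = ψ (b i)) (c : Basis κ R N) :
    IsUnit (c.det (ψ ∘ c)) := by
  let e := b.indexEquiv c
  have hb'e : ∀ k, b'.reindex e k = ψ (b.reindex e k) := by simp [hb']
  rw [det_apply, ← c.toMatrix_mul_toMatrix (b'.reindex e), toMatrix_semilinear_comp ψ hb'e,
    Matrix.det_mul, ← RingHom.mapMatrix_apply, ← RingHom.map_det]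
  exact (c.isUnit_det _).mul (((b.reindex e).isUnit_det c).map φ)

theorem det_sumQuot_semilinear_comp {W : Submodule R N} (hW : ∀ x ∈ W, ψ x ∈ W)
    {m n : Type*} [Fintype m] [Fintype n] [DecidableEq m] [DecidableEq n]
    (bW : Basis m R W) (bQ : Basis n R (N ⧸ W)) :
    (sumQuot bW bQ).det (ψ ∘ sumQuot bW bQ) =
      bW.det (ψ.restrict hW ∘ bW) * bQ.det (W.mapQ W ψ hW ∘ bQ) := by
  simp only [det_apply]
  set T := (sumQuot bW bQ).toMatrix (ψ ∘ sumQuot bW bQ)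
  have h₁₁ : T.toBlocks₁₁ = bW.toMatrix (ψ.restrict hW ∘ bW) := by
    ext i j
    simp only [T, Matrix.toBlocks₁₁, Matrix.of_apply, toMatrix_apply, Function.comp_apply,
      sumQuot_inl, sumQuot_repr_inl_of_mem _ _ _ (hW _ (bW j).2)]
    rfl
  have h₂₁ : T.toBlocks₂₁ = 0 := by
    ext i j
    have hψ : (Submodule.Quotient.mk (ψ (bW j)) : N ⧸ W) = 0 :=
      (Quotient.mk_eq_zero W).2 (hW _ (bW j).2)
    simp [T, Matrix.toBlocks₂₁, toMatrix_apply, sumQuot_repr_inr, hψ]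
  have h₂₂ : T.toBlocks₂₂ = bQ.toMatrix (W.mapQ W ψ hW ∘ bQ) := by
    ext i j
    simp only [T, Matrix.toBlocks₂₂, Matrix.of_apply, toMatrix_apply, Function.comp_apply,
      sumQuot_repr_inr, ← sumQuot_inr bW bQ j, mapQ_apply, mkQ_apply]
  rw [← Matrix.fromBlocks_toBlocks T, h₂₁, Matrix.det_fromBlocks_zero₂₁, h₁₁, h₂₂]

theorem exists_basis_coe_eq_of_isUnit_det [Fintype κ] [DecidableEq κ] (c : Basis κ R N)
    {v : κ → N} (h : IsUnit (c.det v)) : ∃ c' : Basis κ R N, ⇑c' = v := by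
  obtain ⟨hli, hsp⟩ := c.is_basis_iff_det.2 h
  exact ⟨.mk hli hsp.ge, coe_mk _ _⟩

end Module.Basis

theorem linearization_iso_of_sub_and_quotient_general
    {R M : Type*} [CommRing R] [IsDomain R] [IsBezout R]
    [AddCommGroup M] [Module R M] [Module.Free R M] [Module.Finite R M]
    (φ : R →+* R)
    (ψ : M →ₛₗ[φ] M)
    {ι : Type*} (b b' : Module.Basis ι R M) (hb' : ∀ i, b' i = ψ (b i))
    (M' : Submodule R M) (hstab : ∀ x ∈ M', ψ x ∈ M')
    [Module.Free R M'] [Module.Finite R M']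
    [NoZeroSMulDivisors R (M ⧸ M')] :
    (∃ (ι' : Type) (_ : Fintype ι') (c c' : Module.Basis ι' R M'),
        ∀ i, (c' i : M) = ψ (c i : M)) ∧
    (∃ (ι'' : Type) (_ : Fintype ι'') (d d' : Module.Basis ι'' R (M ⧸ M')),
        ∀ i, ∃ x : M, (Submodule.Quotient.mk x : M ⧸ M') = d i ∧
          (Submodule.Quotient.mk (ψ x) : M ⧸ M') = d' i) := by
  have : Module.Free R (M ⧸ M') :=
    IsBezout.free_quotient_of_isTorsionFree M' (Module.Finite.iff_fg.1 ‹_›)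
  let c := finBasis R M'
  let d := finBasis R (M ⧸ M')
  have hunit := Basis.isUnit_det_semilinear_comp ψ hb' (c.sumQuot d)
  rw [Basis.det_sumQuot_semilinear_comp ψ hstab] at hunit
  obtain ⟨c', hc'⟩ := c.exists_basis_coe_eq_of_isUnit_det (isUnit_of_mul_isUnit_left hunit)
  obtain ⟨d', hd'⟩ := d.exists_basis_coe_eq_of_isUnit_det (isUnit_of_mul_isUnit_right hunit)
  refine ⟨⟨_, inferInstance, c, c', fun i => by rw [hc']; rfl⟩, ⟨_, inferInstance, d, d',
    fun i => ⟨c.sumQuot d (.inr i), Basis.sumQuot_inr c d i, ?_⟩⟩⟩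
  rw [hd', Function.comp_apply, ← Basis.sumQuot_inr c d i, mapQ_apply]

/-- Let `R` be a Bezout domain, `φ : R →+* R` an injective ring homomorphism making `R` flat
over itself, `M` a finite free `R`-module and `ψ` a `φ`-semilinear endomorphism of `M` whose
linearization `R ⊗_{R,φ} M → M` is an isomorphism (expressed by: `ψ` sends a basis `b` to a
basis `b'`).  If `M' ⊆ M` is a `ψ`-stable finite free submodule with `M/M'` torsion-free of
complementary rank, then the linearizations of `ψ` on `M'` and on `M/M'` are again
isomorphisms (expressed by: they send bases to bases). -/
theorem linearization_iso_of_sub_and_quotient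
    {R M : Type*} [CommRing R] [IsDomain R] [IsBezout R]
    [AddCommGroup M] [Module R M] [Module.Free R M] [Module.Finite R M]
    (φ : R →+* R) (hφ : Function.Injective φ) (hflat : Module.Flat R (Twisted R φ))
    (ψ : M →ₛₗ[φ] M)
    {ι : Type*} [Fintype ι] (b b' : Module.Basis ι R M) (hb' : ∀ i, b' i = ψ (b i))
    (M' : Submodule R M) (hstab : ∀ x ∈ M', ψ x ∈ M')
    [Module.Free R M'] [Module.Finite R M']
    [NoZeroSMulDivisors R (M ⧸ M')]
    (hrank : Module.rank R M' + Module.rank R (M ⧸ M') = Module.rank R M) :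
    (∃ (ι' : Type) (_ : Fintype ι') (c c' : Module.Basis ι' R M'),
        ∀ i, (c' i : M) = ψ (c i : M)) ∧
    (∃ (ι'' : Type) (_ : Fintype ι'') (d d' : Module.Basis ι'' R (M ⧸ M')),
        ∀ i, ∃ x : M, (Submodule.Quotient.mk x : M ⧸ M') = d i ∧
          (Submodule.Quotient.mk (ψ x) : M ⧸ M') = d' i) :=
  linearization_iso_of_sub_and_quotient_general φ ψ b b' hb' M' hstab
end
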